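/- arXiv:2404.05033 — 2 statements merged into one kernel-verified Lean document; each statement's English description precedes it below -/
import Mathlib

section
/- For any distinct i, j, k ∈ {1,2,3}, letting L be the subgroup of A generated by {eᵢ, eⱼ, mₖ}, each of φᵢⱼ, φⱼₖ and φᵢₖ maps L onto L; i.e. all three S-domain walls condense on the (eᵢ, eⱼ, mₖ)-boundary. -/
/-- The group of topological excitations of three copies of the 3D toric code:
pairs (a, b) of electric/magnetic labels in `(ZMod 2)³`. -/
abbrev A : Type := (Fin 3 → ZMod 2) × (Fin 3 → ZMod 2)

/-- The electric charge `eᵢ`. -/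
def e (i : Fin 3) : A := (Pi.single i 1, 0)

/-- The magnetic flux `mᵢ`. -/
def m (i : Fin 3) : A := (0, Pi.single i 1)

/-- The mutual-statistics pairing `ω((a,b),(a',b')) = a·b' + a'·b`. -/
def ω (x y : A) : ZMod 2 :=
  (∑ t, x.1 t * y.2 t) + (∑ t, y.1 t * x.2 t)

/-- The action of the S-domain wall `s⁽²⁾ᵢⱼ` on excitations:
`(a, b) ↦ (a + bⱼ•δᵢ + bᵢ•δⱼ, b)`. -/
def φ (i j : Fin 3) (x : A) : A :=
  (x.1 + x.2 j • (Pi.single i 1 : Fin 3 → ZMod 2) + x.2 i • (Pi.single j 1 : Fin 3 → ZMod 2), x.2)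

/-- A subgroup `L` of `A` is Lagrangian if it equals its orthogonal complement
with respect to the pairing `ω`. -/
def IsLagrangian (L : AddSubgroup A) : Prop :=
  (L : Set A) = {x : A | ∀ l ∈ L, ω x l = 0}

lemma zmod2_add_self : ∀ c : ZMod 2, c + c = 0 := by decide

lemma zmod2_mul_two (c : ZMod 2) : c * 2 = 0 := by rw [mul_two]; exact zmod2_add_self c

lemma phi_invol (i j : Fin 3) (x : A) : φ i j (φ i j x) = x := by
  unfold φ
  ext t <;> simp [Pi.smul_apply, smul_eq_mul]
  ring_nf
  simp [zmod2_mul_two]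

lemma phi_add (i j : Fin 3) (x y : A) : φ i j (x + y) = φ i j x + φ i j y := by
  unfold φ
  ext t <;> simp [Pi.smul_apply, smul_eq_mul] <;> ring

lemma phi_e (p q t : Fin 3) : φ p q (e t) = e t := by
  simp [φ, e]

lemma phi_m_ne (p q t : Fin 3) (hp : t ≠ p) (hq : t ≠ q) : φ p q (m t) = m t := by
  simp [φ, m, Pi.single_eq_of_ne hp.symm, Pi.single_eq_of_ne hq.symm]

lemma phi_m_eq (p q : Fin 3) (h : p ≠ q) : φ p q (m q) = e p + m q := by
  simp [φ, m, e, Prod.ext_iff, Pi.single_eq_of_ne h, Pi.single_eq_same]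

lemma key (i j : Fin 3) (L : AddSubgroup A) (hL : ∀ x ∈ L, φ i j x ∈ L) :
    φ i j '' (L : Set A) = L := by
  ext x
  constructor
  · rintro ⟨y, hy, rfl⟩; exact hL y hy
  · intro hx
    exact ⟨φ i j x, hL x hx, phi_invol i j x⟩

lemma closure_stable (i j : Fin 3) (S : Set A) (hS : ∀ x ∈ S, φ i j x ∈ AddSubgroup.closure S) :
    ∀ x ∈ AddSubgroup.closure S, φ i j x ∈ AddSubgroup.closure S := by
  intro x hx
  induction hx using AddSubgroup.closure_induction with
  | mem y hy => exact hS y hy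
  | zero => convert (AddSubgroup.closure S).zero_mem using 1; simp [φ, Prod.ext_iff]
  | add y z _ _ hy hz => rw [phi_add]; exact add_mem hy hz
  | neg y _ hy =>
      have h0 : φ i j (0 : A) = 0 := by simp [φ, Prod.ext_iff]
      have := phi_add i j y (-y)
      rw [add_neg_cancel, h0] at this
      rw [eq_neg_of_add_eq_zero_right this.symm]
      exact neg_mem hy

theorem stmt_10 (i j k : Fin 3) (hij : i ≠ j) (hjk : j ≠ k) (hik : i ≠ k) :
    φ i j '' ((AddSubgroup.closure {e i, e j, m k} : AddSubgroup A) : Set A) =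
      ((AddSubgroup.closure {e i, e j, m k} : AddSubgroup A) : Set A) ∧
    φ j k '' ((AddSubgroup.closure {e i, e j, m k} : AddSubgroup A) : Set A) =
      ((AddSubgroup.closure {e i, e j, m k} : AddSubgroup A) : Set A) ∧
    φ i k '' ((AddSubgroup.closure {e i, e j, m k} : AddSubgroup A) : Set A) =
      ((AddSubgroup.closure {e i, e j, m k} : AddSubgroup A) : Set A) := by
  have hei : e i ∈ AddSubgroup.closure ({e i, e j, m k} : Set A) :=
    AddSubgroup.subset_closure (by simp)
  have hej : e j ∈ AddSubgroup.closure ({e i, e j, m k} : Set A) :=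
    AddSubgroup.subset_closure (by simp)
  have hmk : m k ∈ AddSubgroup.closure ({e i, e j, m k} : Set A) :=
    AddSubgroup.subset_closure (by simp)
  refine ⟨key _ _ _ (closure_stable _ _ _ ?_), key _ _ _ (closure_stable _ _ _ ?_),
    key _ _ _ (closure_stable _ _ _ ?_)⟩ <;>
  · rintro x hx
    simp only [Set.mem_insert_iff, Set.mem_singleton_iff] at hx
    rcases hx with rfl | rfl | rfl <;>
      first
        | (rw [phi_e]; assumption)
        | (rw [phi_m_ne _ _ _ (Ne.symm ‹_›) (Ne.symm ‹_›)]; assumption)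
        | (rw [phi_m_eq _ _ ‹_›]; exact add_mem ‹_› ‹_›)
end

section
/- For any distinct i, j, k ∈ {1,2,3}, letting L be the subgroup of A generated by {eᵢ + eⱼ, mᵢ + mⱼ, eₖ}, each of φᵢⱼ, φⱼₖ and φᵢₖ maps L onto L; i.e. all three S-domain walls condense on the fold|e-boundary (eᵢeⱼ, mᵢmⱼ, eₖ). -/
/-!
Each wall map `φ a b` is an additive involution that fixes every electric charge, so it maps
`L = ⟨eᵢ + eⱼ, mᵢ + mⱼ, eₖ⟩` onto itself as soon as it maps the generators into `L`. Only
`mᵢ + mⱼ` moves, and it is shifted by `eᵢ + eⱼ` (for `φᵢⱼ`) or by `eₖ` (for `φⱼₖ`, `φᵢₖ`), both in `L`.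
-/

theorem AddSubgroup.image_closure_eq_of_involutive {G : Type*} [AddGroup G] (f : G →+ G)
    (hf : Function.Involutive f) {s : Set G} (hs : ∀ x ∈ s, f x ∈ AddSubgroup.closure s) :
    f '' AddSubgroup.closure s = AddSubgroup.closure s := by
  have hle : (AddSubgroup.closure s).map f ≤ AddSubgroup.closure s := by
    rw [AddMonoidHom.map_closure, AddSubgroup.closure_le]
    rintro _ ⟨x, hx, rfl⟩
    exact hs x hx
  have hmap : (AddSubgroup.closure s).map f = AddSubgroup.closure s :=
    le_antisymm hle fun x hx ↦ ⟨f x, hle ⟨x, hx, rfl⟩, hf x⟩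
  rw [← AddSubgroup.coe_map, hmap]

section φ

variable (a b : Fin 3)

theorem φ_comm : φ a b = φ b a :=
  funext fun _ ↦ Prod.ext (add_right_comm _ _ _) rfl

theorem φ_add (x y : A) : φ a b (x + y) = φ a b x + φ a b y := by
  refine Prod.ext ?_ rfl
  simp only [φ, Prod.fst_add, Prod.snd_add, Pi.add_apply, add_smul]
  abel

theorem φ_involutive : Function.Involutive (φ a b) := by
  intro x
  ext t
  · simp only [φ, Pi.add_apply]
    ring_nf
    reduce_mod_char
  · rfl

theorem φ_e (s : Fin 3) : φ a b (e s) = e s := by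
  simp [φ, e]

variable {a b}

theorem φ_m_left (hab : a ≠ b) : φ a b (m a) = m a + e b := by
  ext t <;> simp [φ, m, e, hab.symm]

theorem φ_m_right (hab : a ≠ b) : φ a b (m b) = m b + e a := by
  rw [φ_comm, φ_m_left hab.symm]

theorem φ_m_of_ne {s : Fin 3} (hsa : s ≠ a) (hsb : s ≠ b) : φ a b (m s) = m s := by
  ext t <;> simp [φ, m, hsa.symm, hsb.symm]

theorem φ_image_closure {s : Set A} (hs : ∀ x ∈ s, φ a b x ∈ AddSubgroup.closure s) :
    φ a b '' AddSubgroup.closure s = AddSubgroup.closure s :=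
  AddSubgroup.image_closure_eq_of_involutive (AddMonoidHom.mk' (φ a b) (φ_add a b))
    (φ_involutive a b) hs

end φ

theorem stmt_11 (i j k : Fin 3) (hij : i ≠ j) (hjk : j ≠ k) (hik : i ≠ k) :
    φ i j '' ((AddSubgroup.closure {e i + e j, m i + m j, e k} : AddSubgroup A) : Set A) =
      ((AddSubgroup.closure {e i + e j, m i + m j, e k} : AddSubgroup A) : Set A) ∧
    φ j k '' ((AddSubgroup.closure {e i + e j, m i + m j, e k} : AddSubgroup A) : Set A) =
      ((AddSubgroup.closure {e i + e j, m i + m j, e k} : AddSubgroup A) : Set A) ∧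
    φ i k '' ((AddSubgroup.closure {e i + e j, m i + m j, e k} : AddSubgroup A) : Set A) =
      ((AddSubgroup.closure {e i + e j, m i + m j, e k} : AddSubgroup A) : Set A) := by
  set L : AddSubgroup A := AddSubgroup.closure {e i + e j, m i + m j, e k}
  have hee : e i + e j ∈ L := AddSubgroup.subset_closure (by simp)
  have hmm : m i + m j ∈ L := AddSubgroup.subset_closure (by simp)
  have hek : e k ∈ L := AddSubgroup.subset_closure (by simp)
  have preserves : ∀ a b, φ a b (m i + m j) ∈ L → φ a b '' L = L := fun a b h ↦
    φ_image_closure <| by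
      rintro _ (rfl | rfl | rfl)
      · rwa [φ_add, φ_e, φ_e]
      · exact h
      · rwa [φ_e]
  refine ⟨preserves i j ?_, preserves j k ?_, preserves i k ?_⟩
  · rw [φ_add, φ_m_left hij, φ_m_right hij]
    convert add_mem hee hmm using 1
    abel
  · rw [φ_add, φ_m_of_ne hij hik, φ_m_left hjk]
    convert add_mem hmm hek using 1
    abel
  · rw [φ_add, φ_m_left hik, φ_m_of_ne hij.symm hjk]
    convert add_mem hmm hek using 1
    abel
end
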